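/- Let Γ be a finite connected self 2-distance graph with at least two vertices, having no 4-cycle subgraph, and not isomorphic to the cycle graph Cₙ for any odd n ≥ 5. If Γ has a 5-cycle subgraph, then Γ is isomorphic to C₅|C₃. -/

import Mathlib

open SimpleGraph

/-- The 2-distance graph of a graph `G`: two distinct vertices are adjacent
iff their distance in `G` equals `2`. -/
def twoDistGraph {V : Type*} (G : SimpleGraph V) : SimpleGraph V where
  Adj u v := G.dist u v = 2
  symm := by
    constructor
    intro u v h
    show G.dist v u = 2
    rwa [SimpleGraph.dist_comm]
  loopless := by
    constructor
    intro v h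
    show False
    simp [SimpleGraph.dist_self] at h

/-- `G` has an `n`-cycle subgraph: `n` distinct vertices `v 0, …, v (n-1)` with
`v i` adjacent to `v (i+1 mod n)` for all `i`. -/
def HasNCycle {V : Type*} (G : SimpleGraph V) (n : ℕ) : Prop :=
  ∃ v : ZMod n → V, Function.Injective v ∧ ∀ i, G.Adj (v i) (v (i + 1))

/-- The edged product `C₅|C₃`: a pentagon and a triangle glued along an edge. -/
def C5C3 : SimpleGraph (Fin 6) :=
  SimpleGraph.fromEdgeSet {s(0,1), s(1,2), s(2,3), s(3,4), s(4,5), s(5,0), s(1,5)}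

/-!
In a `C₄`-free graph a pentagon `p` has no chords, so `p i` and `p (i + 2)` are at distance two
and `i ↦ φ (p (2 * i))` is again a pentagon, for `φ : G₂ ≃g G`. A vertex outside `p` adjacent to
it sees either two consecutive vertices of `p` (it is an ear of `p`) or exactly one, and then its
image under `φ` is an ear of the image pentagon. Two ears on the same edge span a `4`-cycle of
`G`, two ears on adjacent edges a `4`-cycle of `G₂`, and ears on non-adjacent edges become, under
`φ`, ears on adjacent edges of the image pentagon. So an ear is unique, and the same bookkeeping
shows that no further vertex is adjacent to pentagon plus ear. By connectedness `G` is then either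
the pentagon itself, which is excluded, or `C₅|C₃`.
-/

section

variable {V : Type*} {G : SimpleGraph V}

lemma twoDistGraph_adj {u v : V} : (twoDistGraph G).Adj u v ↔ G.dist u v = 2 := Iff.rfl

lemma dist_eq_two_of_adj_of_adj {u v w : V} (huv : G.Adj u v) (hvw : G.Adj v w)
    (huw : ¬ G.Adj u w) (hne : u ≠ w) : G.dist u w = 2 := by
  have hle : G.dist u w ≤ 2 := by simpa using G.dist_le (huv.toWalk.concat hvw)
  have h0 : G.dist u w ≠ 0 :=
    dist_ne_zero_iff_ne_and_reachable.mpr ⟨hne, ⟨huv.toWalk.concat hvw⟩⟩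
  have h1 : G.dist u w ≠ 1 := fun h => huw (dist_eq_one_iff_adj.mp h)
  omega

lemma hasNCycle_four_of_adj {a b c d : V} (hab : G.Adj a b) (hbc : G.Adj b c) (hcd : G.Adj c d)
    (hda : G.Adj d a) (hac : a ≠ c) (hbd : b ≠ d) : HasNCycle G 4 := by
  have := hab.ne; have := hbc.ne; have := hcd.ne; have := hda.ne
  have hinj : Function.Injective ![a, b, c, d] := fun i j h => by
    fin_cases i <;> fin_cases j <;> simp_all [eq_comm]
  exact ⟨![a, b, c, d], hinj, fun i => by fin_cases i <;> assumption⟩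

lemma HasNCycle.map {W : Type*} {H : SimpleGraph W} (f : G ↪g H) {n : ℕ} (h : HasNCycle G n) :
    HasNCycle H n :=
  let ⟨v, hv, hadj⟩ := h
  ⟨f ∘ v, f.injective.comp hv, fun i => f.map_adj_iff.mpr (hadj i)⟩

lemma SimpleGraph.Connected.mem_of_forall_adj_mem (hG : G.Connected) {S : Set V} {u : V}
    (hu : u ∈ S) (hS : ∀ v w, v ∈ S → G.Adj v w → w ∈ S) (w : V) : w ∈ S := by
  by_contra hw
  obtain ⟨d, -, hd, hd'⟩ := (hG u w).some.exists_boundary_dart S hu hw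
  exact hd' (hS _ _ hd d.adj)

lemma ne_of_notMem_range {α β : Type*} {f : α → β} {x : β} (hx : x ∉ Set.range f)
    (i : α) : x ≠ f i :=
  fun e => hx ⟨i, e.symm⟩

lemma zmod_five_cases (k : ZMod 5) : k = 0 ∨ k = 1 ∨ k = 2 ∨ k = 3 ∨ k = 4 := by
  revert k; decide

def IsPentagon (G : SimpleGraph V) (p : ZMod 5 → V) : Prop :=
  Function.Injective p ∧ ∀ i, G.Adj (p i) (p (i + 1))

def IsEar (G : SimpleGraph V) (p : ZMod 5 → V) (a : V) (i : ZMod 5) : Prop :=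
  a ∉ Set.range p ∧ G.Adj a (p i) ∧ G.Adj a (p (i + 1))

namespace IsPentagon

variable {p : ZMod 5 → V} (hp : IsPentagon G p)
include hp

lemma ne {i j : ZMod 5} (h : i ≠ j) : p i ≠ p j := hp.1.ne h

lemma adj {i j : ZMod 5} (h : j = i + 1) : G.Adj (p i) (p j) := h ▸ hp.2 i

lemma rotate (k : ZMod 5) : IsPentagon G (fun i => p (i + k)) :=
  ⟨fun i j h => add_right_cancel (hp.1 h), fun i => hp.adj (by ring)⟩

lemma map {W : Type*} {H : SimpleGraph W} (f : G ↪g H) : IsPentagon H (f ∘ p) :=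
  ⟨f.injective.comp hp.1, fun i => f.map_adj_iff.mpr (hp.2 i)⟩

lemma not_adj_add_two (hG4 : ¬ HasNCycle G 4) (i : ZMod 5) : ¬ G.Adj (p i) (p (i + 2)) :=
  fun h => hG4 (hasNCycle_four_of_adj h (hp.adj (j := i + 3) (by ring))
    (hp.adj (i := i + 3) (j := i + 4) (by ring)) (hp.adj (i := i + 4) (by grind))
    (hp.ne (by grind)) (hp.ne (by grind)))

lemma dist_add_two (hG4 : ¬ HasNCycle G 4) (i : ZMod 5) : G.dist (p i) (p (i + 2)) = 2 :=
  dist_eq_two_of_adj_of_adj (hp.2 i) (hp.adj (by ring)) (hp.not_adj_add_two hG4 i)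
    (hp.ne (by grind))

lemma adj_iff (hG4 : ¬ HasNCycle G 4) {i j : ZMod 5} :
    G.Adj (p i) (p j) ↔ j = i + 1 ∨ i = j + 1 := by
  refine ⟨fun h => ?_, fun h => h.elim hp.adj fun h => (hp.adj h).symm⟩
  obtain ⟨k, rfl⟩ : ∃ k, j = i + k := ⟨j - i, by ring⟩
  rcases zmod_five_cases k with rfl | rfl | rfl | rfl | rfl
  · exact (h.ne (by rw [add_zero])).elim
  · exact .inl rfl
  · exact (hp.not_adj_add_two hG4 i h).elim
  · exact (hp.not_adj_add_two hG4 (i + 3) (by rwa [show i + 3 + 2 = i by grind, adj_comm])).elim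
  · exact .inr (by grind)

lemma twoDist (hG4 : ¬ HasNCycle G 4) : IsPentagon (twoDistGraph G) (fun i => p (2 * i)) :=
  ⟨hp.1.comp (by decide), fun i => twoDistGraph_adj.mpr <| by
    simpa only [show 2 * (i + 1) = 2 * i + 2 by ring] using hp.dist_add_two hG4 (2 * i)⟩

lemma not_adj_add_two_of_adj (hG4 : ¬ HasNCycle G 4) {x : V} (hx : x ∉ Set.range p)
    {i : ZMod 5} (h : G.Adj x (p i)) : ¬ G.Adj x (p (i + 2)) :=
  fun h' => hG4 (hasNCycle_four_of_adj h (hp.2 i) (hp.adj (by ring)) h'.symm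
    (ne_of_notMem_range hx _) (hp.ne (by grind)))

end IsPentagon

namespace IsEar

variable {p : ZMod 5 → V} {a b : V} {i : ZMod 5}

lemma rotate (k : ZMod 5) (ha : IsEar G p a (i + k)) : IsEar G (fun j => p (j + k)) a i :=
  ⟨fun ⟨j, hj⟩ => ha.1 ⟨j + k, hj⟩, ha.2.1, by simpa only [add_right_comm] using ha.2.2⟩

lemma map {W : Type*} {H : SimpleGraph W} (f : G ↪g H) (ha : IsEar G p a i) :
    IsEar H (f ∘ p) (f a) i :=
  ⟨fun ⟨j, hj⟩ => ha.1 ⟨j, f.injective hj⟩, f.map_adj_iff.mpr ha.2.1,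
    f.map_adj_iff.mpr ha.2.2⟩

variable (hG4 : ¬ HasNCycle G 4) (hp : IsPentagon G p)
include hG4 hp

lemma adj_iff (ha : IsEar G p a i) {j : ZMod 5} : G.Adj a (p j) ↔ j = i ∨ j = i + 1 := by
  refine ⟨fun h => ?_, by rintro (rfl | rfl); exacts [ha.2.1, ha.2.2]⟩
  obtain ⟨k, rfl⟩ : ∃ k, j = i + k := ⟨j - i, by ring⟩
  rcases zmod_five_cases k with rfl | rfl | rfl | rfl | rfl
  · exact .inl (by ring)
  · exact .inr rfl
  · exact (hp.not_adj_add_two_of_adj hG4 ha.1 ha.2.1 h).elim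
  · exact hp.not_adj_add_two_of_adj hG4 ha.1 ha.2.2 (by rwa [show i + 1 + 2 = i + 3 by ring])
      |>.elim
  · refine (hp.not_adj_add_two_of_adj hG4 ha.1 h ?_).elim
    rw [show i + 4 + 2 = i + 1 by grind]
    exact ha.2.2

lemma twoDist (ha : IsEar G p a i) :
    IsEar (twoDistGraph G) (fun j => p (2 * j)) a (3 * i + 1) := by
  refine ⟨fun ⟨j, hj⟩ => ha.1 ⟨2 * j, hj⟩, twoDistGraph_adj.mpr ?_,
    twoDistGraph_adj.mpr ?_⟩
  · dsimp only
    rw [show 2 * (3 * i + 1) = i + 2 by grind]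
    exact dist_eq_two_of_adj_of_adj ha.2.2 (hp.adj (by ring))
      (fun h => absurd ((ha.adj_iff hG4 hp).mp h) (by grind)) (ne_of_notMem_range ha.1 _)
  · dsimp only
    rw [show 2 * (3 * i + 1 + 1) = i + 4 by grind]
    exact dist_eq_two_of_adj_of_adj ha.2.1 (hp.adj (by grind)).symm
      (fun h => absurd ((ha.adj_iff hG4 hp).mp h) (by grind)) (ne_of_notMem_range ha.1 _)

lemma not_isEar_add_one (h4₂ : ¬ HasNCycle (twoDistGraph G) 4) (ha : IsEar G p a i) :
    ¬ IsEar G p b (i + 1) := by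
  intro hb
  have hb₂ : G.Adj b (p (i + 2)) := by convert hb.2.2 using 2; ring
  have hab : a ≠ b := by
    rintro rfl
    exact absurd ((ha.adj_iff hG4 hp).mp hb₂) (by grind)
  have hnab : ¬ G.Adj a b := fun h =>
    hG4 (hasNCycle_four_of_adj h hb₂ (hp.adj (by ring)).symm ha.2.2.symm
      (ne_of_notMem_range ha.1 _) (ne_of_notMem_range hb.1 _))
  refine h4₂ (hasNCycle_four_of_adj (c := p i) (d := p (i + 2)) ?_ ?_ (hp.dist_add_two hG4 i) ?_
    (ne_of_notMem_range ha.1 i) (ne_of_notMem_range hb.1 _))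
  · exact dist_eq_two_of_adj_of_adj ha.2.2 hb.2.1.symm hnab hab
  · exact dist_eq_two_of_adj_of_adj hb.2.1 (hp.2 i).symm
      (fun h => absurd ((hb.adj_iff hG4 hp).mp h) (by grind)) (ne_of_notMem_range hb.1 i)
  · exact dist_eq_two_of_adj_of_adj (hp.adj (by ring)).symm ha.2.2.symm
      (fun h => absurd ((ha.adj_iff hG4 hp).mp h.symm) (by grind))
      (ne_of_notMem_range ha.1 _).symm

end IsEar

lemma not_hasNCycle_four_twoDistGraph (hG4 : ¬ HasNCycle G 4) (φ : twoDistGraph G ≃g G) :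
    ¬ HasNCycle (twoDistGraph G) 4 :=
  fun h => hG4 (h.map φ.toEmbedding)

section SelfTwoDistance

variable {p : ZMod 5 → V} {a b : V} {i : ZMod 5}
  (hG4 : ¬ HasNCycle G 4) (φ : twoDistGraph G ≃g G) (hp : IsPentagon G p)
include hG4 φ hp

lemma IsPentagon.mapTwoDist : IsPentagon G (φ ∘ fun j => p (2 * j)) :=
  (hp.twoDist hG4).map φ.toEmbedding

lemma IsEar.mapTwoDist (ha : IsEar G p a i) :
    IsEar G (φ ∘ fun j => p (2 * j)) (φ a) (3 * i + 1) :=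
  (ha.twoDist hG4 hp).map φ.toEmbedding

lemma IsEar.not_isEar_add_two (ha : IsEar G p a i) : ¬ IsEar G p b (i + 2) := fun hb => by
  have hb' := hb.mapTwoDist hG4 φ hp
  rw [show 3 * (i + 2) + 1 = 3 * i + 1 + 1 by grind] at hb'
  exact (ha.mapTwoDist hG4 φ hp).not_isEar_add_one hG4 (hp.mapTwoDist hG4 φ)
    (not_hasNCycle_four_twoDistGraph hG4 φ) hb'

lemma IsEar.eq (ha : IsEar G p a i) {j : ZMod 5} (hb : IsEar G p b j) : a = b := by
  have h4₂ := not_hasNCycle_four_twoDistGraph hG4 φ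
  obtain ⟨k, rfl⟩ : ∃ k, j = i + k := ⟨j - i, by ring⟩
  rcases zmod_five_cases k with rfl | rfl | rfl | rfl | rfl
  · by_contra hab
    rw [add_zero] at hb
    exact hG4 (hasNCycle_four_of_adj ha.2.1 hb.2.1.symm hb.2.2 ha.2.2.symm hab (hp.ne (by grind)))
  · exact (ha.not_isEar_add_one hG4 hp h4₂ hb).elim
  · exact (ha.not_isEar_add_two hG4 φ hp hb).elim
  · exact (hb.not_isEar_add_two hG4 φ hp (by rwa [show i + 3 + 2 = i by grind])).elim
  · exact (hb.not_isEar_add_one hG4 hp h4₂ (by rwa [show i + 4 + 1 = i by grind])).elim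

omit hG4 in
lemma IsPentagon.exists_isEar_of_adj {x : V} (hx : x ∉ Set.range p) (h : G.Adj x (p i)) :
    (∃ j, IsEar G p x j) ∨ ∃ j, IsEar G (φ ∘ fun j => p (2 * j)) (φ x) j := by
  by_cases h₁ : G.Adj x (p (i + 1))
  · exact .inl ⟨i, hx, h, h₁⟩
  by_cases h₄ : G.Adj x (p (i + 4))
  · exact .inl ⟨i + 4, hx, h₄, by rwa [show i + 4 + 1 = i by grind]⟩
  have hx₂ : IsEar (twoDistGraph G) (fun j => p (2 * j)) x (3 * i + 2) := by
    refine ⟨fun ⟨j, hj⟩ => hx ⟨2 * j, hj⟩, twoDistGraph_adj.mpr ?_,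
      twoDistGraph_adj.mpr ?_⟩
    · dsimp only
      rw [show 2 * (3 * i + 2) = i + 4 by grind]
      exact dist_eq_two_of_adj_of_adj h (hp.adj (by grind)).symm h₄ (ne_of_notMem_range hx _)
    · dsimp only
      rw [show 2 * (3 * i + 2 + 1) = i + 1 by grind]
      exact dist_eq_two_of_adj_of_adj h (hp.2 i) h₁ (ne_of_notMem_range hx _)
  exact .inr ⟨_, hx₂.map φ.toEmbedding⟩

lemma IsEar.eq_of_adj (ha : IsEar G p a i) {x : V} (hx : x ∉ Set.range p) {j : ZMod 5}
    (h : G.Adj x (p j)) : x = a := by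
  rcases hp.exists_isEar_of_adj φ hx h with ⟨k, hk⟩ | ⟨k, hk⟩
  · exact hk.eq hG4 φ hp ha
  · exact φ.injective (hk.eq hG4 φ (hp.mapTwoDist hG4 φ) (ha.mapTwoDist hG4 φ hp))

lemma IsEar.mem_insert_range (hconn : G.Connected) (ha : IsEar G p a i) (v : V) :
    v ∈ insert a (Set.range p) := by
  refine hconn.mem_of_forall_adj_mem (Set.mem_insert a _) (fun u x hu hux => ?_) v
  by_contra hx
  obtain ⟨hxa, hxp⟩ : x ≠ a ∧ x ∉ Set.range p := by
    simpa only [Set.mem_insert_iff, not_or] using hx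
  have hx_nadj : ∀ j, ¬ G.Adj x (p j) := fun j h => hxa (ha.eq_of_adj hG4 φ hp hxp h)
  rcases hu with rfl | ⟨j, rfl⟩
  · -- `φ x` is adjacent to `φ (p i)` and `φ (p (i + 1))`, two apart on the image pentagon
    have hφx : φ x ∉ Set.range (φ ∘ fun j => p (2 * j)) :=
      fun ⟨j, hj⟩ => hxp ⟨_, φ.injective hj⟩
    have h₀ : G.Adj (φ x) (φ (p (2 * (3 * i + 3 + 2)))) := by
      rw [show 2 * (3 * i + 3 + 2) = i by grind]
      exact φ.map_adj_iff.mpr <|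
        dist_eq_two_of_adj_of_adj hux.symm ha.2.1 (hx_nadj _) (ne_of_notMem_range hxp _)
    have h₁ : G.Adj (φ x) (φ (p (2 * (3 * i + 3)))) := by
      rw [show 2 * (3 * i + 3) = i + 1 by grind]
      exact φ.map_adj_iff.mpr <|
        dist_eq_two_of_adj_of_adj hux.symm ha.2.2 (hx_nadj _) (ne_of_notMem_range hxp _)
    exact (hp.mapTwoDist hG4 φ).not_adj_add_two_of_adj hG4 hφx h₁ h₀
  · exact hx_nadj j hux.symm

lemma IsPentagon.exists_isEar (hconn : G.Connected) (hsurj : ¬ Function.Surjective p) :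
    ∃ q a i, IsPentagon G q ∧ IsEar G q a i := by
  obtain ⟨y, hy⟩ := not_forall.mp hsurj
  obtain ⟨⟨⟨_, x⟩, h⟩, -, ⟨i, rfl⟩, hx⟩ :=
    (hconn (p 0) y).some.exists_boundary_dart _ (Set.mem_range_self 0) hy
  rcases hp.exists_isEar_of_adj φ hx h.symm with ⟨j, hj⟩ | ⟨j, hj⟩
  exacts [⟨p, x, j, hp, hj⟩, ⟨_, _, j, hp.mapTwoDist hG4 φ, hj⟩]

end SelfTwoDistance

-- `ZMod 5` is `Fin 5` by definition: below, vertices of `cycleGraph 5` and of the pentagon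
-- `1, …, 5` of `C5C3` are read as elements of `ZMod 5`.
lemma cycleGraph_five_adj (i j : Fin 5) :
    (cycleGraph 5).Adj i j ↔ ((j : ZMod 5) = i + 1 ∨ (i : ZMod 5) = j + 1) := by
  revert i j; decide

lemma C5C3_adj_zero_succ (j : Fin 5) :
    C5C3.Adj 0 j.succ ↔ ((j : ZMod 5) = 4 ∨ (j : ZMod 5) = 4 + 1) := by
  simp only [C5C3, fromEdgeSet_adj, Set.mem_insert_iff, Set.mem_singleton_iff, Sym2.eq_iff]
  revert j; decide

lemma C5C3_adj_succ_succ (i j : Fin 5) :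
    C5C3.Adj i.succ j.succ ↔ ((j : ZMod 5) = i + 1 ∨ (i : ZMod 5) = j + 1) := by
  simp only [C5C3, fromEdgeSet_adj, Set.mem_insert_iff, Set.mem_singleton_iff, Sym2.eq_iff]
  revert i j; decide

section Isomorphisms

variable {p : ZMod 5 → V} (hG4 : ¬ HasNCycle G 4) (hp : IsPentagon G p)
include hG4 hp

noncomputable def IsPentagon.isoCycleGraph (hsurj : Function.Surjective p) : G ≃g cycleGraph 5 :=
  RelIso.symm ⟨Equiv.ofBijective p ⟨hp.1, hsurj⟩, fun {i j} =>
    (hp.adj_iff hG4).trans (cycleGraph_five_adj i j).symm⟩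

noncomputable def IsEar.isoC5C3 {a : V} (ha : IsEar G p a 4)
    (hcover : ∀ v, v ∈ insert a (Set.range p)) : G ≃g C5C3 :=
  RelIso.symm ⟨Equiv.ofBijective (Fin.cons a p : Fin 6 → V)
    ⟨Fin.cons_injective_iff.mpr ⟨ha.1, hp.1⟩,
      Set.range_eq_univ.mp ((Fin.range_cons a p).trans (Set.eq_univ_of_forall hcover))⟩,
    fun {i j} => by
      cases i using Fin.cases <;> cases j using Fin.cases
      · exact iff_of_false (G.irrefl) (C5C3.irrefl)
      · exact (ha.adj_iff hG4 hp).trans (C5C3_adj_zero_succ _).symm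
      · exact (G.adj_comm _ _).trans <| (ha.adj_iff hG4 hp).trans <|
          (C5C3_adj_zero_succ _).symm.trans (C5C3.adj_comm _ _)
      · exact (hp.adj_iff hG4).trans (C5C3_adj_succ_succ _ _).symm⟩

end Isomorphisms

end

theorem iso_C5C3_of_c4Free_hasC5_general {V : Type*} (G : SimpleGraph V)
    (hconn : G.Connected)
    (hself : Nonempty (twoDistGraph G ≃g G))
    (h4 : ¬ HasNCycle G 4)
    (hcyc : ∀ n : ℕ, 5 ≤ n → Odd n → IsEmpty (G ≃g cycleGraph n))
    (h5 : HasNCycle G 5) :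
    Nonempty (G ≃g C5C3) := by
  obtain ⟨φ⟩ := hself
  obtain ⟨p, hp : IsPentagon G p⟩ := h5
  by_cases hsurj : Function.Surjective p
  · exact ((hcyc 5 le_rfl (by decide)).false (hp.isoCycleGraph h4 hsurj)).elim
  obtain ⟨q, a, i, hq, ha⟩ := hp.exists_isEar h4 φ hconn hsurj
  have hq' := hq.rotate (i - 4)
  have ha' : IsEar G (fun j => q (j + (i - 4))) a 4 := IsEar.rotate _ (by rwa [add_sub_cancel])
  exact ⟨ha'.isoC5C3 h4 hq' (ha'.mem_insert_range h4 φ hq' hconn)⟩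

/-- A connected self 2-distance graph with no 4-cycle, not an odd cycle of
length ≥ 5, which has a 5-cycle subgraph, is isomorphic to C₅|C₃. -/
theorem iso_C5C3_of_c4Free_hasC5 {V : Type*} [Fintype V] (G : SimpleGraph V)
    (hconn : G.Connected) (hcard : 1 < Fintype.card V)
    (hself : Nonempty (twoDistGraph G ≃g G))
    (h4 : ¬ HasNCycle G 4)
    (hcyc : ∀ n : ℕ, 5 ≤ n → Odd n → IsEmpty (G ≃g cycleGraph n))
    (h5 : HasNCycle G 5) :
    Nonempty (G ≃g C5C3) :=
  iso_C5C3_of_c4Free_hasC5_general G hconn hself h4 hcyc h5
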